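/- arXiv:2303.08408 — 2 statements merged into one kernel-verified Lean document; each statement's English description precedes it below -/
import Mathlib

section
/- Let ν be a σ-finite Borel measure on ℝ concentrated on (−∞,0) with ∫_{(−∞,0)} min(z², |z|) ν(dz) < ∞ and tail ν̄(x) := ν((−∞,−x]) regularly varying at infinity with index −α for some α ∈ (1,2). Assume there exists β with α ≤ β < 2 such that liminf_{x ↓ 0} x^{β−2} ∫_{(−x,0)} z² ν(dz) > 0. Let g : (0,∞) → (0,∞) be regularly varying at infinity with index 1/α with x·ν̄(g(x)) → 1 as x → ∞, and fix δ ∈ (0, 1/α). Then there exist t_α > 0 and κ > 0 such that for all t ≥ t_α and all λ ∈ ℝ with |λ| > π, t · ∫_{(−∞,0)} (cos(λz/g(t)) − 1) ν(dz) ≤ −κ |λ|^δ. -/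
open Filter MeasureTheory Set

set_option maxHeartbeats 1000000

lemma aux_chain (f : ℝ → ℝ) (X : ℝ) (hX : 1 ≤ X)
    (hhalf : ∀ x ≥ X, f (2*x) ≤ f x / 2) :
    ∀ n : ℕ, ∀ x ≥ X, f (2^n * x) ≤ f x / 2^n := by
  intro n
  induction n with
  | zero => intro x hx; simp
  | succ n ih =>
    intro x hx
    have hx0 : (0:ℝ) < x := by linarith
    have h2 : X ≤ 2^n * x := le_trans hx (le_mul_of_one_le_left hx0.le (one_le_pow₀ (by norm_num)))
    have h1 : (2:ℝ)^(n+1) * x = 2 * (2^n * x) := by ring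
    calc f (2^(n+1)*x) = f (2*(2^n*x)) := by rw [h1]
      _ ≤ f (2^n*x)/2 := hhalf _ h2
      _ ≤ (f x / 2^n)/2 := by linarith [ih x hx]
      _ = f x / 2^(n+1) := by ring

lemma aux_decay (f : ℝ → ℝ) (X δ : ℝ) (hX : 1 ≤ X) (hδ0 : 0 < δ) (hδ1 : δ < 1)
    (hmono : ∀ ⦃x y : ℝ⦄, X ≤ x → x ≤ y → f y ≤ f x)
    (hfnn : ∀ x ≥ X, 0 ≤ f x)
    (hhalf : ∀ x ≥ X, f (2*x) ≤ f x / 2) :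
    ∀ ε > 0, ∃ Y, X ≤ Y ∧ ∀ y ≥ Y, y ^ δ * f y ≤ ε := by
  intro ε hε
  have hX0 : (0:ℝ) < X := by linarith
  set r : ℝ := (2:ℝ)^δ / 2 with hrdef
  have hr0 : 0 < r := by positivity
  have hr1 : r < 1 := by
    have : (2:ℝ)^δ < 2^(1:ℝ) := Real.rpow_lt_rpow_of_exponent_lt (by norm_num) hδ1
    rw [Real.rpow_one] at this
    rw [hrdef]; linarith
  have htend : Tendsto (fun n : ℕ => (2*X*f X) * r^n) atTop (nhds 0) := by
    have := tendsto_pow_atTop_nhds_zero_of_lt_one hr0.le hr1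
    simpa using this.const_mul (2*X*f X)
  obtain ⟨N, hN⟩ := eventually_atTop.1 (htend.eventually (eventually_le_nhds hε))
  refine ⟨2^N * X, le_mul_of_one_le_left hX0.le (one_le_pow₀ (by norm_num)), ?_⟩
  intro y hy
  have hyX : X ≤ y := le_trans (le_mul_of_one_le_left hX0.le (one_le_pow₀ (by norm_num))) hy
  have hy0 : 0 < y := lt_of_lt_of_le hX0 hyX
  have hyX1 : 1 ≤ y / X := (one_le_div hX0).2 hyX
  obtain ⟨n, hn1, hn2⟩ := exists_nat_pow_near hyX1 (by norm_num : (1:ℝ) < 2)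
  have hNn : N ≤ n := by
    by_contra hc
    push_neg at hc
    have h1 : (2:ℝ)^N ≤ y / X := (le_div_iff₀ hX0).2 hy
    have h2 : (2:ℝ)^(n+1) ≤ 2^N := pow_le_pow_right₀ (by norm_num) hc
    linarith
  have hfy : f y ≤ f X / 2^n := by
    have h1 : (2:ℝ)^n * X ≤ y := (le_div_iff₀ hX0).1 hn1
    have h2 : X ≤ 2^n * X := le_mul_of_one_le_left hX0.le (one_le_pow₀ (by norm_num))
    exact le_trans (hmono h2 h1) (aux_chain f X hX hhalf n X le_rfl)
  have hyδ : y ^ δ ≤ 2 * ((2:ℝ)^δ)^n * X := by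
    have h1 : y ≤ 2^(n+1) * X := (div_le_iff₀ hX0).1 hn2.le
    have h2 : y ^ δ ≤ ((2:ℝ)^(n+1) * X) ^ δ :=
      Real.rpow_le_rpow hy0.le h1 hδ0.le
    have h3 : ((2:ℝ)^(n+1) * X) ^ δ = ((2:ℝ)^(n+1))^δ * X^δ :=
      Real.mul_rpow (by positivity) hX0.le
    have h4 : ((2:ℝ)^(n+1))^δ = ((2:ℝ)^δ)^(n+1) := by
      rw [← Real.rpow_natCast 2 (n+1), ← Real.rpow_natCast ((2:ℝ)^δ) (n+1),
        ← Real.rpow_mul (by norm_num), ← Real.rpow_mul (by positivity), mul_comm]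
    have h5 : X ^ δ ≤ X := by
      nth_rewrite 2 [← Real.rpow_one X]
      exact Real.rpow_le_rpow_of_exponent_le hX hδ1.le
    have h6 : ((2:ℝ)^δ)^(n+1) = (2:ℝ)^δ * ((2:ℝ)^δ)^n := by ring
    have h7 : (2:ℝ)^δ ≤ 2 := by
      have : (2:ℝ)^δ ≤ 2^(1:ℝ) := Real.rpow_le_rpow_of_exponent_le (by norm_num) hδ1.le
      rwa [Real.rpow_one] at this
    calc y ^ δ ≤ ((2:ℝ)^(n+1))^δ * X^δ := by rw [← h3]; exact h2
      _ = ((2:ℝ)^δ * ((2:ℝ)^δ)^n) * X^δ := by rw [h4, h6]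
      _ ≤ (2 * ((2:ℝ)^δ)^n) * X := by
          have hp : (0:ℝ) ≤ ((2:ℝ)^δ)^n := by positivity
          have hXδ : (0:ℝ) ≤ X ^ δ := by positivity
          have e1 : (2:ℝ)^δ * ((2:ℝ)^δ)^n * X^δ ≤ 2 * ((2:ℝ)^δ)^n * X^δ := by
            nlinarith [mul_nonneg hp hXδ]
          have e2 : 2 * ((2:ℝ)^δ)^n * X^δ ≤ 2 * ((2:ℝ)^δ)^n * X := by
            nlinarith [hp]
          linarith
  have hfX : 0 ≤ f X := hfnn X le_rfl
  have hfy0 : 0 ≤ f y := hfnn y hyX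
  calc y ^ δ * f y ≤ (2 * ((2:ℝ)^δ)^n * X) * (f X / 2^n) := by
        apply mul_le_mul hyδ hfy hfy0 (by positivity)
    _ = (2 * X * f X) * r^n := by
        rw [hrdef, div_pow]; field_simp
    _ ≤ (2 * X * f X) * r^N := by
        apply mul_le_mul_of_nonneg_left (pow_le_pow_of_le_one hr0.le hr1.le hNn)
        positivity
    _ ≤ ε := hN N le_rfl

/-- Lemma 4.2 of the paper (analytic content): uniform exponential bound on the
real part of the characteristic exponent of the rescaled process. -/
theorem char_exponent_uniform_bound_stable (α β δ : ℝ)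
    (hα1 : 1 < α) (hα2 : α < 2) (hβ1 : α ≤ β) (hβ2 : β < 2)
    (hδ1 : 0 < δ) (hδ2 : δ < 1 / α)
    (ν : Measure ℝ) [SigmaFinite ν]
    (hconc : ν (Ici (0 : ℝ)) = 0)
    (hmin : ∫⁻ z, ENNReal.ofReal (min (z ^ 2) |z|) ∂ν ≠ ⊤)
    (htail : ∀ᶠ x in atTop, 0 < ν (Iic (-x)) ∧ ν (Iic (-x)) < ⊤)
    (hRV : ∀ c : ℝ, 0 < c →
      Tendsto (fun x => (ν (Iic (-(c * x)))).toReal / (ν (Iic (-x))).toReal)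
        atTop (nhds (c ^ (-α))))
    (hliminf : 0 < Filter.liminf
      (fun x => x ^ (β - 2) * (∫⁻ z in Ioo (-x) (0 : ℝ), ENNReal.ofReal (z ^ 2) ∂ν).toReal)
      (nhdsWithin 0 (Ioi 0)))
    (g : ℝ → ℝ) (hgpos : ∀ x > 0, 0 < g x)
    (hgRV : ∀ c : ℝ, 0 < c →
      Tendsto (fun x => g (c * x) / g x) atTop (nhds (c ^ (1 / α))))
    (hg : Tendsto (fun x => x * (ν (Iic (-g x))).toReal) atTop (nhds 1)) :
    ∃ tα > (0 : ℝ), ∃ κ > (0 : ℝ), ∀ t ≥ tα, ∀ lam : ℝ, Real.pi < |lam| →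
      t * ∫ z in Iio (0 : ℝ), (Real.cos (lam * z / g t) - 1) ∂ν ≤ -κ * |lam| ^ δ := by

  have hπ := Real.pi_gt_three
  have hπ0 : (0:ℝ) < Real.pi := by linarith
  have hδlt1 : δ < 1 := lt_trans hδ2 (by rw [div_lt_one (by linarith)]; exact hα1)
  set f : ℝ → ℝ := fun x => (ν (Iic (-x))).toReal with hfdef
  set Q : ℝ → ℝ := fun x => (∫⁻ z in Ioo (-x) (0:ℝ), ENNReal.ofReal (z^2) ∂ν).toReal with hQdef
  have hmeas_min : Measurable fun z : ℝ => ENNReal.ofReal (min (z^2) |z|) := by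
    exact ((measurable_id.pow_const 2).min measurable_abs).ennreal_ofReal
  have hmeas_sq : Measurable fun z : ℝ => ENNReal.ofReal (z^2) := by
    exact (measurable_id.pow_const 2).ennreal_ofReal
  -- finiteness of Q's lintegral
  have hQfin : ∀ x : ℝ, (∫⁻ z in Ioo (-x) (0:ℝ), ENNReal.ofReal (z^2) ∂ν) ≠ ⊤ := by
    intro x
    have hb : ∀ z ∈ Ioo (-x) (0:ℝ),
        ENNReal.ofReal (z^2) ≤ ENNReal.ofReal (max x 1 * min (z^2) |z|) := by
      intro z hz
      apply ENNReal.ofReal_le_ofReal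
      rcases le_or_gt |z| 1 with h1 | h1
      · rw [min_eq_left (by nlinarith [sq_abs z, abs_nonneg z])]
        nlinarith [le_max_right x 1, sq_nonneg z]
      · rw [min_eq_right (by nlinarith [sq_abs z])]
        have hzx : |z| < x := by
          rcases hz with ⟨h2, h3⟩; rw [abs_of_neg h3]; linarith
        nlinarith [le_max_left x 1, abs_nonneg z, sq_abs z]
    have hle : (∫⁻ z in Ioo (-x) (0:ℝ), ENNReal.ofReal (z^2) ∂ν)
        ≤ ENNReal.ofReal (max x 1) * ∫⁻ z, ENNReal.ofReal (min (z^2) |z|) ∂ν := by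
      calc (∫⁻ z in Ioo (-x) (0:ℝ), ENNReal.ofReal (z^2) ∂ν)
          ≤ ∫⁻ z in Ioo (-x) (0:ℝ), ENNReal.ofReal (max x 1 * min (z^2) |z|) ∂ν :=
            setLIntegral_mono
              ((measurable_const.mul ((measurable_id.pow_const 2).min measurable_abs)).ennreal_ofReal) hb
        _ ≤ ∫⁻ z, ENNReal.ofReal (max x 1 * min (z^2) |z|) ∂ν :=
            lintegral_mono' Measure.restrict_le_self le_rfl
        _ = ENNReal.ofReal (max x 1) * ∫⁻ z, ENNReal.ofReal (min (z^2) |z|) ∂ν := by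
            simp_rw [ENNReal.ofReal_mul (le_trans zero_le_one (le_max_right x 1))]
            exact lintegral_const_mul _ hmeas_min
    exact ne_top_of_le_ne_top (by
      exact (ENNReal.mul_lt_top ENNReal.ofReal_lt_top hmin.lt_top).ne) hle
  have hQnn : ∀ x : ℝ, 0 ≤ Q x := fun x => ENNReal.toReal_nonneg
  have hQmono : ∀ x y : ℝ, x ≤ y → Q x ≤ Q y := by
    intro x y h
    exact ENNReal.toReal_mono (hQfin y)
      (lintegral_mono_set (fun z hz => ⟨by linarith [hz.1], hz.2⟩))
  -- tail threshold
  obtain ⟨X₀', hX₀'⟩ := eventually_atTop.1 htail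
  -- ratio at 2
  have h2α : (2:ℝ)^(-α) < 1/2 := by
    have : (2:ℝ)^(-α) < 2^(-1:ℝ) := Real.rpow_lt_rpow_of_exponent_lt (by norm_num) (by linarith)
    rw [Real.rpow_neg_one] at this
    linarith
  have hev2 : ∀ᶠ x in atTop, f (2*x) / f x < 1/2 :=
    (hRV 2 two_pos).eventually_lt_const h2α
  obtain ⟨X₂', hX₂'⟩ := eventually_atTop.1 (hev2.and htail)
  set X₂ : ℝ := max X₂' (max X₀' 1) with hX₂def
  have hX₂1 : 1 ≤ X₂ := le_trans (le_max_right _ _) (le_max_right _ _)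
  have htail₂ : ∀ x, X₂ ≤ x → 0 < ν (Iic (-x)) ∧ ν (Iic (-x)) < ⊤ := by
    intro x hx
    exact hX₀' x (le_trans (le_trans (le_max_left _ _) (le_max_right X₂' _)) hx)
  have hfpos : ∀ x, X₂ ≤ x → 0 < f x := fun x hx =>
    ENNReal.toReal_pos (htail₂ x hx).1.ne' (htail₂ x hx).2.ne
  have hhalf : ∀ x ≥ X₂, f (2*x) ≤ f x / 2 := by
    intro x hx
    have h := (hX₂' x (le_trans (le_max_left _ _) hx)).1
    have hfx := hfpos x hx
    rw [div_lt_iff₀ hfx] at h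
    linarith
  have hf_anti : ∀ ⦃x y : ℝ⦄, X₂ ≤ x → x ≤ y → f y ≤ f x := by
    intro x y hx hxy
    exact ENNReal.toReal_mono (htail₂ x hx).2.ne
      (measure_mono (Iic_subset_Iic.2 (by linarith)))
  -- g tends to infinity
  have hgtop : Tendsto g atTop atTop := by
    rw [tendsto_atTop]
    intro b
    set M := max b X₂ with hM
    have hfM : 0 < f M := hfpos M (le_max_right _ _)
    have h1 : ∀ᶠ t in atTop, t * f (g t) < 2 := hg.eventually_lt_const (by norm_num)
    have h2 : ∀ᶠ t in atTop, 1/2 < t * f (g t) := hg.eventually_const_lt (by norm_num)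
    filter_upwards [h1, h2, eventually_ge_atTop (2 / f M + 1)] with t ht2 ht12 htM
    by_contra hcon
    push_neg at hcon
    have ht0 : (0:ℝ) < t := by
      have := div_nonneg (by norm_num : (0:ℝ) ≤ 2) hfM.le
      linarith
    have hgM : g t ≤ M := le_trans hcon.le (le_max_left _ _)
    have hsub : ν (Iic (-M)) ≤ ν (Iic (-(g t))) :=
      measure_mono (Iic_subset_Iic.2 (by linarith))
    have hgt_fin : ν (Iic (-(g t))) ≠ ⊤ := by
      intro htop
      have : f (g t) = 0 := by rw [hfdef]; simp [htop]
      rw [this, mul_zero] at ht12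
      linarith
    have hle : f M ≤ f (g t) := ENNReal.toReal_mono hgt_fin hsub
    have : 2 < t * f (g t) := by
      calc (2:ℝ) = (2 / f M) * f M := by field_simp
        _ < t * f M := by
            apply mul_lt_mul_of_pos_right _ hfM
            linarith
        _ ≤ t * f (g t) := mul_le_mul_of_nonneg_left hle ht0.le
    linarith
  -- liminf extraction
  have hbdd : IsBoundedUnder (· ≥ ·) (nhdsWithin (0:ℝ) (Ioi 0))
      (fun x => x ^ (β - 2) * (∫⁻ z in Ioo (-x) (0 : ℝ), ENNReal.ofReal (z ^ 2) ∂ν).toReal) := by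
    refine ⟨0, eventually_map.2 ?_⟩
    filter_upwards [self_mem_nhdsWithin] with x hx
    exact mul_nonneg (Real.rpow_nonneg (le_of_lt hx) _) ENNReal.toReal_nonneg
  have hc₁ : 0 < Filter.liminf
      (fun x => x ^ (β - 2) * (∫⁻ z in Ioo (-x) (0 : ℝ), ENNReal.ofReal (z ^ 2) ∂ν).toReal)
      (nhdsWithin 0 (Ioi 0)) / 2 := by linarith
  set c₁ := Filter.liminf
      (fun x => x ^ (β - 2) * (∫⁻ z in Ioo (-x) (0 : ℝ), ENNReal.ofReal (z ^ 2) ∂ν).toReal)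
      (nhdsWithin 0 (Ioi 0)) / 2 with hc₁def
  have hev : ∀ᶠ x in nhdsWithin (0:ℝ) (Ioi 0),
      c₁ < x ^ (β - 2) * (∫⁻ z in Ioo (-x) (0 : ℝ), ENNReal.ofReal (z ^ 2) ∂ν).toReal :=
    eventually_lt_of_lt_liminf (by linarith) hbdd
  rw [eventually_nhdsWithin_iff] at hev
  rw [Metric.eventually_nhds_iff] at hev
  obtain ⟨ε, hε, hevx⟩ := hev
  set x₁ : ℝ := min (ε/2) 1 with hx₁def
  have hx₁pos : 0 < x₁ := lt_min (by linarith) one_pos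
  have hx₁le1 : x₁ ≤ 1 := min_le_right _ _
  have hA : ∀ x : ℝ, 0 < x → x ≤ x₁ → c₁ ≤ x ^ (β - 2) * Q x := by
    intro x hx0 hx1
    have hd : dist x 0 < ε := by
      rw [Real.dist_eq, sub_zero, abs_of_pos hx0]
      calc x ≤ x₁ := hx1
        _ ≤ ε/2 := min_le_left _ _
        _ < ε := by linarith
    exact (hevx hd hx0).le
  -- tail lower bound for Q
  have hQtail : ∀ x : ℝ, 2*X₂ ≤ x → x^2/4 * f x ≤ Q x := by
    intro x hx
    have hx2 : X₂ ≤ x/2 := by linarith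
    have hxX₂ : X₂ ≤ x := by linarith [hX₂1]
    have hxpos : (0:ℝ) < x := by linarith [hX₂1]
    have h1 : f x ≤ f (x/2) / 2 := by
      have h := hhalf (x/2) hx2
      rw [show 2 * (x/2) = x by ring] at h
      exact h
    have hsub : Iic (-x) ⊆ Iic (-(x/2)) := Iic_subset_Iic.2 (by linarith)
    have hfinx : ν (Iic (-x)) ≠ ⊤ := (htail₂ x hxX₂).2.ne
    have hfinx2 : ν (Iic (-(x/2))) ≠ ⊤ := (htail₂ (x/2) hx2).2.ne
    have hIoc : ν (Ioc (-x) (-(x/2))) = ν (Iic (-(x/2))) - ν (Iic (-x)) := by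
      rw [← Iic_sdiff_Iic]
      exact measure_diff hsub measurableSet_Iic.nullMeasurableSet hfinx
    have hss : Ioc (-x) (-(x/2)) ⊆ Ioo (-x) (0:ℝ) := by
      intro z hz
      exact ⟨hz.1, by linarith [hz.2]⟩
    have hlb : ENNReal.ofReal (x^2/4) * ν (Ioc (-x) (-(x/2)))
        ≤ ∫⁻ z in Ioo (-x) (0:ℝ), ENNReal.ofReal (z^2) ∂ν := by
      calc ENNReal.ofReal (x^2/4) * ν (Ioc (-x) (-(x/2)))
          = ∫⁻ _ in Ioc (-x) (-(x/2)), ENNReal.ofReal (x^2/4) ∂ν := (setLIntegral_const _ _).symm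
        _ ≤ ∫⁻ z in Ioc (-x) (-(x/2)), ENNReal.ofReal (z^2) ∂ν := by
            apply setLIntegral_mono hmeas_sq
            intro z hz
            apply ENNReal.ofReal_le_ofReal
            nlinarith [hz.2, sq_nonneg (z + x/2)]
        _ ≤ ∫⁻ z in Ioo (-x) (0:ℝ), ENNReal.ofReal (z^2) ∂ν := lintegral_mono_set hss
    have hR := ENNReal.toReal_mono (hQfin x) hlb
    rw [ENNReal.toReal_mul, ENNReal.toReal_ofReal (by positivity)] at hR
    have hIocR : (ν (Ioc (-x) (-(x/2)))).toReal = f (x/2) - f x := by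
      rw [hIoc, ENNReal.toReal_sub_of_le (measure_mono hsub) hfinx2]
    rw [hIocR] at hR
    have hfx2nn : 0 ≤ f x := ENNReal.toReal_nonneg
    calc x^2/4 * f x ≤ x^2/4 * (f (x/2) - f x) := by nlinarith [sq_nonneg x]
      _ ≤ Q x := hR
  -- constants
  set q : ℝ := c₁ * x₁ ^ (2 - β) with hqdef
  have hqpos : 0 < q := mul_pos hc₁ (Real.rpow_pos_of_pos hx₁pos _)
  set ε₀ : ℝ := min (2*c₁/Real.pi) (q * x₁^δ / (2*Real.pi*X₂^2)) with hε₀def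
  have hX₂0 : (0:ℝ) < X₂ := by linarith
  have hε₀pos : 0 < ε₀ := lt_min (by positivity) (by positivity)
  obtain ⟨Y, hYX₂, hY⟩ := aux_decay f X₂ δ hX₂1 hδ1 hδlt1 hf_anti
    (fun x hx => ENNReal.toReal_nonneg) hhalf (ε₀/4) (by positivity)
  have hev_all : ∀ᶠ t in atTop,
      1/2 < t * f (g t) ∧ (max Y (2*X₂+1)) ≤ g t ∧ 1 ≤ t :=
    (hg.eventually_const_lt (by norm_num)).and
      ((hgtop.eventually (eventually_ge_atTop _)).and (eventually_ge_atTop 1))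
  obtain ⟨tα', htα'⟩ := eventually_atTop.1 hev_all
  have main : ∀ t ≥ max tα' 1, ∀ lam : ℝ, Real.pi < |lam| →
      t * ∫ z in Iio (0 : ℝ), (Real.cos (lam * z / g t) - 1) ∂ν
        ≤ -(1/(8*Real.pi)) * |lam| ^ δ := by
    intro t ht lam hlam
    obtain ⟨h_tf, h_gY, h_t1⟩ := htα' t (le_trans (le_max_left _ _) ht)
    have ht0 : (0:ℝ) < t := by linarith
    set G : ℝ := g t with hGdef
    have hG0 : 0 < G := hgpos t ht0
    have hGY : Y ≤ G := le_trans (le_max_left _ _) h_gY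
    have hGX : 2*X₂ + 1 ≤ G := le_trans (le_max_right _ _) h_gY
    have hGX₂ : X₂ ≤ G := by linarith
    have hfG : 0 < f G := hfpos G hGX₂
    -- G^δ ≤ ε₀ * t
    have hGδ : G ^ δ ≤ ε₀ * t := by
      have h3 : G^δ * f G ≤ ε₀/4 := hY G hGY
      have hGδ0 : (0:ℝ) ≤ G ^ δ := Real.rpow_nonneg hG0.le δ
      have e1 : G^δ * f G * t ≤ (ε₀/4) * t := mul_le_mul_of_nonneg_right h3 ht0.le
      have e2 : G^δ * (1/2) ≤ G^δ * (t * f G) := mul_le_mul_of_nonneg_left h_tf.le hGδ0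
      nlinarith [mul_pos hε₀pos ht0]
    -- geometry of x
    have hlam0 : 0 < |lam| := lt_trans hπ0 hlam
    have hlamne : lam ≠ 0 := by
      intro h
      rw [h, abs_zero] at hlam0
      exact lt_irrefl _ hlam0
    set x : ℝ := Real.pi * G / |lam| with hxdef
    have hx0 : 0 < x := by positivity
    have hxG : x < G := by
      rw [hxdef, div_lt_iff₀ hlam0]
      calc Real.pi * G < |lam| * G := by
            exact mul_lt_mul_of_pos_right hlam hG0
        _ = G * |lam| := mul_comm _ _
    have hlamx : |lam| * x = Real.pi * G := by
      rw [hxdef]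
      field_simp
    -- integrability of the integrand
    have hcont : Continuous (fun z : ℝ => Real.cos (lam * z / G) - 1) := by
      fun_prop
    have hbound : ∀ z : ℝ, ‖Real.cos (lam*z/G) - 1‖ ≤ ((lam/G)^2/2 + 2) * min (z^2) |z| := by
      intro z
      have hc1 : Real.cos (lam*z/G) ≤ 1 := Real.cos_le_one _
      have hc2 : 1 - (lam*z/G)^2/2 ≤ Real.cos (lam*z/G) := Real.one_sub_sq_div_two_le_cos
      have hc3 : -1 ≤ Real.cos (lam*z/G) := Real.neg_one_le_cos _
      rw [Real.norm_eq_abs, abs_of_nonpos (by linarith only [hc1])]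
      have hexp : (lam*z/G)^2 = (lam/G)^2 * z^2 := by ring
      rw [hexp] at hc2
      rcases le_or_gt |z| 1 with h1 | h1
      · rw [min_eq_left (by nlinarith only [sq_abs z, abs_nonneg z, h1] : z^2 ≤ |z|)]
        nlinarith only [hc2, sq_nonneg z]
      · rw [min_eq_right (by nlinarith only [sq_abs z, h1] : |z| ≤ z^2)]
        nlinarith only [hc3, h1, mul_nonneg (by positivity : (0:ℝ) ≤ (lam/G)^2/2) (abs_nonneg z)]
    have hInt : Integrable (fun z : ℝ => Real.cos (lam*z/G) - 1) ν := by
      refine ⟨hcont.aestronglyMeasurable, ?_⟩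
      rw [hasFiniteIntegral_iff_norm]
      calc (∫⁻ z, ENNReal.ofReal ‖Real.cos (lam*z/G) - 1‖ ∂ν)
          ≤ ∫⁻ z, ENNReal.ofReal (((lam/G)^2/2 + 2) * min (z^2) |z|) ∂ν :=
            lintegral_mono (fun z => ENNReal.ofReal_le_ofReal (hbound z))
        _ = ENNReal.ofReal ((lam/G)^2/2 + 2) * ∫⁻ z, ENNReal.ofReal (min (z^2) |z|) ∂ν := by
            simp_rw [ENNReal.ofReal_mul (by positivity : (0:ℝ) ≤ (lam/G)^2/2 + 2)]
            exact lintegral_const_mul _ hmeas_min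
        _ < ⊤ := ENNReal.mul_lt_top ENNReal.ofReal_lt_top hmin.lt_top
    set c' : ℝ := 2/Real.pi^2 * (lam/G)^2 with hc'def
    have hc'pos : 0 < c' := by positivity
    have hIntQ : IntegrableOn (fun z : ℝ => -(c' * z^2)) (Ioo (-x) (0:ℝ)) ν := by
      refine ⟨(Continuous.aestronglyMeasurable (by fun_prop)), ?_⟩
      rw [hasFiniteIntegral_iff_norm]
      have hptw : ∀ z : ℝ, ENNReal.ofReal ‖-(c' * z^2)‖
          = ENNReal.ofReal c' * ENNReal.ofReal (z^2) := by
        intro z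
        rw [norm_neg, Real.norm_eq_abs, abs_mul, abs_of_nonneg hc'pos.le,
          abs_of_nonneg (sq_nonneg z), ENNReal.ofReal_mul hc'pos.le]
      calc (∫⁻ z in Ioo (-x) (0:ℝ), ENNReal.ofReal ‖-(c' * z^2)‖ ∂ν)
          = ∫⁻ z in Ioo (-x) (0:ℝ), ENNReal.ofReal c' * ENNReal.ofReal (z^2) ∂ν := by
            simp_rw [hptw]
        _ = ENNReal.ofReal c' * ∫⁻ z in Ioo (-x) (0:ℝ), ENNReal.ofReal (z^2) ∂ν :=
            lintegral_const_mul _ hmeas_sq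
        _ < ⊤ := ENNReal.mul_lt_top ENNReal.ofReal_lt_top (hQfin x).lt_top
    -- the key integral inequality
    have key : ∫ z in Iio (0:ℝ), (Real.cos (lam*z/G) - 1) ∂ν ≤ -(c' * Q x) := by
      have hdisj : Disjoint (Iic (-x)) (Ioo (-x) (0:ℝ)) :=
        (Iic_disjoint_Ioi le_rfl).mono le_rfl Ioo_subset_Ioi_self
      have hsplit : ∫ z in Iio (0:ℝ), (Real.cos (lam*z/G) - 1) ∂ν
          = (∫ z in Iic (-x), (Real.cos (lam*z/G) - 1) ∂ν)
            + (∫ z in Ioo (-x) (0:ℝ), (Real.cos (lam*z/G) - 1) ∂ν) := by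
        rw [← setIntegral_union hdisj measurableSet_Ioo hInt.integrableOn hInt.integrableOn,
          Iic_union_Ioo_eq_Iio (by linarith only [hx0] : -x < (0:ℝ))]
      have h1 : ∫ z in Iic (-x), (Real.cos (lam*z/G) - 1) ∂ν ≤ 0 :=
        integral_nonpos (fun z => sub_nonpos.2 (Real.cos_le_one _))
      have h2 : ∫ z in Ioo (-x) (0:ℝ), (Real.cos (lam*z/G) - 1) ∂ν
          ≤ ∫ z in Ioo (-x) (0:ℝ), -(c' * z^2) ∂ν := by
        apply setIntegral_mono_on hInt.integrableOn hIntQ measurableSet_Ioo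
        intro z hz
        have hzabs : |z| < x := by
          rcases hz with ⟨ha, hb⟩
          rw [abs_of_neg hb]
          linarith only [ha]
        have habs : |lam * z / G| ≤ Real.pi := by
          rw [abs_div, abs_mul, abs_of_pos hG0, div_le_iff₀ hG0]
          calc |lam| * |z| ≤ |lam| * x := by
                exact mul_le_mul_of_nonneg_left hzabs.le (abs_nonneg lam)
            _ = Real.pi * G := hlamx
        have hcos := Real.cos_le_one_sub_mul_cos_sq habs
        have hexp : (lam*z/G)^2 = (lam/G)^2 * z^2 := by ring
        rw [hexp] at hcos
        rw [hc'def]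
        nlinarith only [hcos]
      have h3 : ∫ z in Ioo (-x) (0:ℝ), -(c' * z^2) ∂ν
          = -(c' * ∫ z in Ioo (-x) (0:ℝ), (z^2 : ℝ) ∂ν) := by
        rw [integral_neg, integral_const_mul]
      have h4 : ∫ z in Ioo (-x) (0:ℝ), (z^2 : ℝ) ∂ν = Q x := by
        rw [integral_eq_lintegral_of_nonneg_ae (ae_of_all _ (fun z => sq_nonneg z))
          ((continuous_pow 2).aestronglyMeasurable)]
      rw [h4] at h3
      rw [hsplit]
      linarith only [h1, h2, h3]
    -- reduce to the core inequality
    have hlamδnn : 0 ≤ |lam|^δ := Real.rpow_nonneg (abs_nonneg lam) δ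
    have h8π : 1/(8*Real.pi) ≤ 1 := by
      rw [div_le_one (by positivity)]
      linarith
    have hkey2 : t * ∫ z in Iio (0:ℝ), (Real.cos (lam*z/G) - 1) ∂ν ≤ -(t * (c' * Q x)) := by
      have h := mul_le_mul_of_nonneg_left key ht0.le
      linarith only [h]
    refine le_trans hkey2 ?_
    rw [neg_mul]
    apply neg_le_neg
    have hlamval : |lam| = Real.pi * G / x := by
      rw [eq_div_iff hx0.ne']
      linarith only [hlamx]
    have hc'eq : c' = 2 / x^2 := by
      have h6 : lam^2 * x^2 = Real.pi^2 * G^2 := by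
        have h7 : (|lam| * x)^2 = (Real.pi * G)^2 := by rw [hlamx]
        have h8 : |lam|^2 = lam^2 := sq_abs lam
        nlinarith only [h7, h8]
      rw [hc'def, div_pow, div_mul_div_comm, div_eq_div_iff (by positivity) (by positivity)]
      linear_combination 2 * h6
    have hrhs : t * (c' * Q x) = 2 * (t * Q x) / x^2 := by
      rw [hc'eq]; ring
    rw [hrhs, le_div_iff₀ (by positivity : (0:ℝ) < x^2)]
    -- goal : 1/(8π) * |lam|^δ * x^2 ≤ 2 * (t * Q x)
    have hstep1 : 1/(8*Real.pi) * |lam|^δ * x^2 ≤ |lam|^δ * x^2 := by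
      have h := mul_le_mul_of_nonneg_right h8π (mul_nonneg hlamδnn (sq_nonneg x))
      linarith only [h]
    have hQlow : ∀ y : ℝ, 0 < y → y ≤ x₁ → c₁ * y^(2-β) ≤ Q y := by
      intro y hy0 hy1
      have hAy := hA y hy0 hy1
      have hp : (0:ℝ) < y ^ (2-β) := Real.rpow_pos_of_pos hy0 _
      have h7 : y^(2-β) * y^(β-2) = 1 := by
        rw [← Real.rpow_add hy0]
        norm_num
      calc c₁ * y^(2-β) ≤ (y^(β-2) * Q y) * y^(2-β) := mul_le_mul_of_nonneg_right hAy hp.le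
        _ = (y^(2-β) * y^(β-2)) * Q y := by ring
        _ = Q y := by rw [h7, one_mul]
    have eπδ : Real.pi^δ ≤ Real.pi := by
      nth_rewrite 2 [← Real.rpow_one Real.pi]
      exact Real.rpow_le_rpow_of_exponent_le (by linarith) hδlt1.le
    rcases le_or_gt x x₁ with hxA | hxA
    · -- Regime A : x ≤ x₁
      have hQA := hQlow x hx0 hxA
      have e1 : |lam|^δ * x^2 = (Real.pi * G)^δ * x^(2-δ) := by
        rw [hlamval, Real.div_rpow (by positivity) hx0.le,
          ← Real.rpow_natCast x 2, div_mul_eq_mul_div, mul_div_assoc,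
          ← Real.rpow_sub hx0]
        norm_num
      have e2 : (Real.pi * G)^δ ≤ 2 * c₁ * t := by
        rw [Real.mul_rpow hπ0.le hG0.le]
        have e4 : G^δ ≤ (2*c₁/Real.pi) * t :=
          le_trans hGδ (mul_le_mul_of_nonneg_right (min_le_left _ _) ht0.le)
        calc Real.pi^δ * G^δ ≤ Real.pi * ((2*c₁/Real.pi)*t) :=
              mul_le_mul eπδ e4 (Real.rpow_nonneg hG0.le δ) hπ0.le
          _ = 2*c₁*t := by field_simp
      have e5 : x^(2-δ) ≤ x^(2-β) :=
        Real.rpow_le_rpow_of_exponent_ge hx0 (le_trans hxA hx₁le1) (by linarith)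
      calc 1/(8*Real.pi) * |lam|^δ * x^2 ≤ |lam|^δ * x^2 := hstep1
        _ = (Real.pi*G)^δ * x^(2-δ) := e1
        _ ≤ (2*c₁*t) * x^(2-β) := by
            apply mul_le_mul e2 e5 (Real.rpow_nonneg hx0.le _) (by positivity)
        _ = 2 * (t * (c₁ * x^(2-β))) := by ring
        _ ≤ 2 * (t * Q x) := by
            have h := mul_le_mul_of_nonneg_left hQA ht0.le
            linarith only [h]
    rcases le_or_gt x (2*X₂) with hxC | hxB
    · -- Regime C : x₁ < x ≤ 2X₂
      have hQC : q ≤ Q x := le_trans (hQlow x₁ hx₁pos le_rfl) (hQmono x₁ x hxA.le)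
      have hx₁δ : 0 < x₁ ^ δ := Real.rpow_pos_of_pos hx₁pos δ
      have elam : |lam|^δ ≤ (Real.pi * G/x₁)^δ := by
        rw [hlamval]
        apply Real.rpow_le_rpow (by positivity) ?_ hδ1.le
        apply div_le_div_of_nonneg_left (by positivity) hx₁pos hxA.le
      have e6 : (Real.pi * G / x₁)^δ = Real.pi^δ * G^δ / x₁^δ := by
        rw [Real.div_rpow (by positivity) hx₁pos.le, Real.mul_rpow hπ0.le hG0.le]
      have e8 : G^δ ≤ (q * x₁^δ / (2*Real.pi*X₂^2)) * t :=
        le_trans hGδ (mul_le_mul_of_nonneg_right (min_le_right _ _) ht0.le)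
      have e9 : |lam|^δ ≤ q * t / (2 * X₂^2) := by
        calc |lam|^δ ≤ (Real.pi * G/x₁)^δ := elam
          _ = Real.pi^δ * G^δ / x₁^δ := e6
          _ ≤ Real.pi * ((q * x₁^δ / (2*Real.pi*X₂^2)) * t) / x₁^δ := by
              apply div_le_div_of_nonneg_right ?_ hx₁δ.le
              exact mul_le_mul eπδ e8 (Real.rpow_nonneg hG0.le δ) hπ0.le
          _ = q * t / (2 * X₂^2) := by
              field_simp
      have ex2 : x^2 ≤ (2*X₂)^2 := by nlinarith only [hxC, hx0]
      calc 1/(8*Real.pi) * |lam|^δ * x^2 ≤ |lam|^δ * x^2 := hstep1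
        _ ≤ (q*t/(2*X₂^2)) * (2*X₂)^2 := by
            apply mul_le_mul e9 ex2 (sq_nonneg x) (by positivity)
        _ = 2 * (t * q) := by field_simp
        _ ≤ 2 * (t * Q x) := by
            have h := mul_le_mul_of_nonneg_left hQC ht0.le
            linarith only [h]
    · -- Regime B : 2X₂ < x
      have hxX₂ : X₂ ≤ x := by linarith only [hxB, hX₂0]
      have hGx1 : 1 ≤ G / x := by
        rw [le_div_iff₀ hx0, one_mul]
        exact hxG.le
      obtain ⟨n, hn1, hn2⟩ := exists_nat_pow_near hGx1 (by norm_num : (1:ℝ) < 2)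
      have h2nx : 2^n * x ≤ G := (le_div_iff₀ hx0).1 hn1
      have hchainn := aux_chain f X₂ hX₂1 hhalf n x hxX₂
      have hfGle : f G ≤ f (2^n * x) := by
        apply hf_anti ?_ h2nx
        exact le_trans hxX₂ (le_mul_of_one_le_left (by linarith only [hxX₂, hX₂1]) (one_le_pow₀ (by norm_num)))
      have hfxB : 2^n * f G ≤ f x := by
        have h := le_trans hfGle hchainn
        rw [le_div_iff₀ (by positivity : (0:ℝ) < (2:ℝ)^n)] at h
        linarith only [h]
      have hQB : x^2/4 * (2^n * f G) ≤ Q x := by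
        refine le_trans ?_ (hQtail x hxB.le)
        nlinarith only [hfxB, sq_nonneg x]
      have htQ : x^2 * 2^n / 8 ≤ t * Q x := by
        have h9 := mul_le_mul_of_nonneg_left hQB ht0.le
        have h11 := mul_le_mul_of_nonneg_left h_tf.le
          (by positivity : (0:ℝ) ≤ x^2*(2:ℝ)^n/4)
        linarith only [h9, h11]
      have e10 : |lam|^δ ≤ |lam| := by
        nth_rewrite 2 [← Real.rpow_one |lam|]
        exact Real.rpow_le_rpow_of_exponent_le (by linarith only [hlam, hπ]) hδlt1.le
      have h13 : G ≤ 2*2^n*x := by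
        have h12 : G/x < 2*2^n := by
          have : ((2:ℝ))^(n+1) = 2*2^n := by ring
          linarith only [hn2, this]
        rw [div_lt_iff₀ hx0] at h12
        linarith only [h12]
      calc 1/(8*Real.pi) * |lam|^δ * x^2 ≤ 1/(8*Real.pi) * |lam| * x^2 := by
            have h := mul_le_mul_of_nonneg_right
              (mul_le_mul_of_nonneg_left e10 (by positivity : (0:ℝ) ≤ 1/(8*Real.pi)))
              (sq_nonneg x)
            linarith only [h]
        _ = G * x / 8 := by
            rw [hlamval]
            field_simp
        _ ≤ x^2 * 2^n / 4 := by
            have h14 := mul_le_mul_of_nonneg_right h13 hx0.le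
            linarith only [h14]
        _ ≤ 2 * (t * Q x) := by linarith only [htQ]


  refine ⟨max tα' 1, lt_of_lt_of_le one_pos (le_max_right _ _),
    1/(8*Real.pi), by positivity, ?_⟩
  intro t ht lam hlam
  have h := main t ht lam hlam
  calc t * ∫ z in Iio (0 : ℝ), (Real.cos (lam * z / g t) - 1) ∂ν
      ≤ -(1/(8*Real.pi)) * |lam| ^ δ := h
    _ = -(1/(8*Real.pi)) * |lam| ^ δ := rfl
end

section
/- Let 1 < α < 2 and set c_α := (Γ(2−α)/(1−α)) · cos(πα/2) > 0. Then ∫_{−∞}^{∞} exp{ −c_α |λ|^α (1 + i · sgn(λ) · tan(πα/2)) } dλ = 2 Γ(1 + 1/α) ((α−1)/Γ(2−α))^{1/α} sin(π/α). -/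
/-!
For `0 < re z`, `∫₀^∞ exp (-z xᵖ) dx = Γ(1/p + 1) z^(-1/p)`: both sides are holomorphic on the
right half-plane and agree on the positive reals by the real Gamma integral. Splitting `ℝ` at `0`,
the integral of the theorem becomes
`Γ(1/α + 1) (z^(-1/α) + (conj z)^(-1/α)) = 2 Γ(1/α + 1) re z^(-1/α)` with
`z = c_α (1 + i tan (πα/2))`. In polar form `z = r e^{i(πα/2 - π)}` with
`r = Γ(2 - α)/(α - 1)`, so `re z^(-1/α) = r^(-1/α) cos (π/α - π/2) = r^(-1/α) sin (π/α)`.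
-/

open MeasureTheory Set Filter Complex Topology ComplexConjugate

lemma norm_cexp_neg_mul_ofReal (z : ℂ) (r : ℝ) : ‖cexp (-z * r)‖ = Real.exp (-z.re * r) := by
  simp [norm_exp, mul_re]

lemma integral_eq_integral_Ioi_add_integral_Ioi_comp_neg {E : Type*} [NormedAddCommGroup E]
    [NormedSpace ℝ E] {f : ℝ → E} (hpos : IntegrableOn f (Ioi 0))
    (hneg : IntegrableOn (fun x => f (-x)) (Ioi 0)) :
    ∫ x, f x = (∫ x in Ioi 0, f x) + ∫ x in Ioi 0, f (-x) := by
  have hIic : IntegrableOn f (Iic 0) := by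
    have h : IntegrableOn (fun x => f (-x)) (Ici (-0)) := by
      rwa [neg_zero, integrableOn_Ici_iff_integrableOn_Ioi]
    simpa only [neg_neg] using h.comp_neg_Iic
  rw [← intervalIntegral.integral_Iic_add_Ioi hIic hpos, add_comm, integral_comp_neg_Ioi, neg_zero]

section

variable {p : ℝ}

lemma integrableOn_Ioi_cexp_neg_mul_rpow (hp : 0 < p) {z : ℂ} (hz : 0 < z.re) :
    IntegrableOn (fun x : ℝ => cexp (-z * ((x ^ p : ℝ) : ℂ))) (Ioi 0) := by
  have h := integrableOn_rpow_mul_exp_neg_mul_rpow (s := 0) (by norm_num) hp hz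
  simp_rw [Real.rpow_zero, one_mul] at h
  exact h.mono' (by fun_prop) (ae_of_all _ fun x => (norm_cexp_neg_mul_ofReal z _).le)

lemma differentiableOn_integral_Ioi_cexp_neg_mul_rpow (hp : 0 < p) :
    DifferentiableOn ℂ (fun z : ℂ => ∫ x : ℝ in Ioi 0, cexp (-z * ((x ^ p : ℝ) : ℂ)))
      {z | 0 < z.re} := by
  intro w hw
  obtain ⟨ε, hε, hεw⟩ := exists_between (show 0 < w.re from hw)
  have hnhds : {z : ℂ | ε < z.re} ∈ 𝓝 w :=
    (isOpen_lt continuous_const continuous_re).mem_nhds hεw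
  refine (hasDerivAt_integral_of_dominated_loc_of_deriv_le
    (μ := volume.restrict (Ioi 0)) (F := fun (z : ℂ) (x : ℝ) => cexp (-z * ((x ^ p : ℝ) : ℂ)))
    (F' := fun (z : ℂ) (x : ℝ) => -((x ^ p : ℝ) : ℂ) * cexp (-z * ((x ^ p : ℝ) : ℂ)))
    (bound := fun x => x ^ p * Real.exp (-ε * x ^ p)) hnhds
    (Eventually.of_forall fun _ => by fun_prop) (integrableOn_Ioi_cexp_neg_mul_rpow hp hw)
    (by fun_prop) ?_ (integrableOn_rpow_mul_exp_neg_mul_rpow (by linarith) hp hε)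
    (ae_of_all _ fun x z _ => ?_)).2.differentiableAt.differentiableWithinAt
  · filter_upwards [ae_restrict_mem measurableSet_Ioi] with x (hx : 0 < x) z (hz : ε < z.re)
    have hxp : 0 ≤ x ^ p := Real.rpow_nonneg hx.le p
    rw [norm_mul, norm_neg, norm_real, norm_cexp_neg_mul_ofReal, Real.norm_of_nonneg hxp]
    gcongr
  · simpa [mul_comm] using ((hasDerivAt_id z).neg.mul_const ((x ^ p : ℝ) : ℂ)).cexp

lemma integral_Ioi_cexp_neg_mul_rpow (hp : 0 < p) {z : ℂ} (hz : 0 < z.re) :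
    ∫ x : ℝ in Ioi 0, cexp (-z * ((x ^ p : ℝ) : ℂ)) =
      Real.Gamma (1 / p + 1) * z ^ ((-(1 / p) : ℝ) : ℂ) := by
  have hU : IsOpen {z : ℂ | 0 < z.re} := isOpen_lt continuous_const continuous_re
  have hlhs := (differentiableOn_integral_Ioi_cexp_neg_mul_rpow hp).analyticOnNhd hU
  have hrhs : AnalyticOnNhd ℂ (fun z : ℂ => Real.Gamma (1 / p + 1) * z ^ ((-(1 / p) : ℝ) : ℂ))
      {z | 0 < z.re} := DifferentiableOn.analyticOnNhd (fun w hw =>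
    ((differentiableAt_id.cpow_const (Or.inl hw)).const_mul _).differentiableWithinAt) hU
  have hreal : ∀ b : ℝ, 0 < b → ∫ x : ℝ in Ioi 0, cexp (-b * ((x ^ p : ℝ) : ℂ)) =
      Real.Gamma (1 / p + 1) * (b : ℂ) ^ ((-(1 / p) : ℝ) : ℂ) := by
    intro b hb
    have hcast : ∀ x : ℝ, cexp (-b * ((x ^ p : ℝ) : ℂ)) = ((Real.exp (-b * x ^ p) : ℝ) : ℂ) := by
      intro x
      rw [ofReal_exp, ofReal_mul, ofReal_neg]
    rw [setIntegral_congr_fun measurableSet_Ioi fun x _ => hcast x, integral_complex_ofReal,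
      integral_exp_neg_mul_rpow hp hb, ← ofReal_cpow hb.le, neg_div, ofReal_mul, mul_comm]
  have hofReal : Tendsto ((↑) : ℝ → ℂ) (𝓝[>] 1) (𝓝[≠] 1) :=
    tendsto_nhdsWithin_iff.2 ⟨(continuous_ofReal.tendsto' 1 1 ofReal_one).mono_left
      nhdsWithin_le_nhds, eventually_nhdsWithin_of_forall fun b hb => by simpa using hb.ne'⟩
  refine hlhs.eqOn_of_preconnected_of_frequently_eq hrhs (convex_halfSpace_re_gt 0).isPreconnected
    (by simp) (hofReal.frequently ?_) hz
  exact (eventually_nhdsWithin_of_forall (s := Ioi 1) fun b (hb : 1 < b) =>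
    hreal b (by linarith)).frequently

lemma integral_cexp_neg_mul_abs_rpow_mul_sign (hp : 0 < p) {c : ℝ} (hc : 0 < c) (t : ℝ) :
    ∫ x : ℝ, cexp (-(c : ℂ) * ((|x| ^ p : ℝ) : ℂ) * (1 + I * (Real.sign x : ℂ) * (t : ℂ))) =
      ((2 * Real.Gamma (1 / p + 1) * (((c : ℂ) * (1 + I * t)) ^ ((-(1 / p) : ℝ) : ℂ)).re : ℝ) :
        ℂ) := by
  set z : ℂ := c * (1 + I * t) with hz_def
  have hz : 0 < z.re := by simpa [z] using hc
  have hz' : 0 < (conj z).re := by simpa using hz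
  have hpos : ∀ x ∈ Ioi (0 : ℝ),
      cexp (-(c : ℂ) * ((|x| ^ p : ℝ) : ℂ) * (1 + I * (Real.sign x : ℂ) * (t : ℂ))) =
        cexp (-z * ((x ^ p : ℝ) : ℂ)) := by
    intro x (hx : 0 < x)
    rw [abs_of_pos hx, Real.sign_of_pos hx, hz_def]
    congr 1
    push_cast
    ring
  have hneg : ∀ x ∈ Ioi (0 : ℝ),
      cexp (-(c : ℂ) * ((|-x| ^ p : ℝ) : ℂ) * (1 + I * (Real.sign (-x) : ℂ) * (t : ℂ))) =
        cexp (-conj z * ((x ^ p : ℝ) : ℂ)) := by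
    intro x (hx : 0 < x)
    rw [abs_neg, abs_of_pos hx, Real.sign_of_neg (neg_neg_of_pos hx), hz_def]
    simp only [map_mul, map_add, conj_ofReal, map_one, conj_I]
    congr 1
    push_cast
    ring
  have harg : z.arg ≠ Real.pi := (arg_lt_pi_iff.2 (Or.inl hz.le)).ne
  rw [integral_eq_integral_Ioi_add_integral_Ioi_comp_neg
      ((integrableOn_Ioi_cexp_neg_mul_rpow hp hz).congr_fun (fun x hx => (hpos x hx).symm)
        measurableSet_Ioi)
      ((integrableOn_Ioi_cexp_neg_mul_rpow hp hz').congr_fun (fun x hx => (hneg x hx).symm)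
        measurableSet_Ioi),
    setIntegral_congr_fun measurableSet_Ioi hpos, setIntegral_congr_fun measurableSet_Ioi hneg,
    integral_Ioi_cexp_neg_mul_rpow hp hz, integral_Ioi_cexp_neg_mul_rpow hp hz',
    conj_cpow _ _ harg, conj_ofReal, ← mul_add, add_conj]
  push_cast
  ring

end

lemma re_ofReal_mul_cos_add_sin_mul_I_cpow {r : ℝ} (hr : 0 < r) {φ : ℝ}
    (hφ : φ ∈ Ioc (-Real.pi) Real.pi) (y : ℝ) :
    (((r : ℂ) * (cos φ + sin φ * I)) ^ (y : ℂ)).re = r ^ y * Real.cos (φ * y) := by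
  rw [cpow_ofReal_re, arg_mul_cos_add_sin_mul_I hr hφ, norm_mul, norm_cos_add_sin_mul_I,
    norm_real, Real.norm_of_nonneg hr.le, mul_one]

lemma ofReal_mul_cos_mul_one_add_I_mul_tan {θ : ℝ} (hθ : Real.cos θ ≠ 0) (a : ℝ) :
    ((a * Real.cos θ : ℝ) : ℂ) * (1 + I * Real.tan θ) =
      ((-a : ℝ) : ℂ) * (cos ↑(θ - Real.pi) + sin ↑(θ - Real.pi) * I) := by
  have hθ' : cos (θ : ℂ) ≠ 0 := by rw [← ofReal_cos]; exact_mod_cast hθ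
  rw [← ofReal_cos, ← ofReal_sin, Real.cos_sub_pi, Real.sin_sub_pi, Real.tan_eq_sin_div_cos]
  push_cast
  field_simp
  ring

/-- Lemma 4.4 of the paper: the integral over `ℝ` of the `α`-stable characteristic
function, `1 < α < 2`, with `c_α = (Γ(2-α)/(1-α)) cos(πα/2) > 0`. -/
theorem stable_char_function_integral (α : ℝ) (hα1 : 1 < α) (hα2 : α < 2)
    (hc : 0 < Real.Gamma (2 - α) / (1 - α) * Real.cos (Real.pi * α / 2)) :
    (∫ lam : ℝ, Complex.exp
        (-(((Real.Gamma (2 - α) / (1 - α) * Real.cos (Real.pi * α / 2) : ℝ) : ℂ)) *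
          ((|lam| ^ α : ℝ) : ℂ) *
          (1 + Complex.I * Real.sign lam * Real.tan (Real.pi * α / 2)))) =
      ((2 * Real.Gamma (1 + 1 / α) * ((α - 1) / Real.Gamma (2 - α)) ^ (1 / α) *
          Real.sin (Real.pi / α) : ℝ) : ℂ) := by
  set θ := Real.pi * α / 2 with hθ_def
  have hθ : θ - Real.pi ∈ Ioc (-Real.pi) Real.pi := by
    constructor <;> nlinarith [Real.pi_pos]
  have hcos : Real.cos θ ≠ 0 :=
    (Real.cos_neg_of_pi_div_two_lt_of_lt (by nlinarith [Real.pi_pos])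
      (by nlinarith [Real.pi_pos])).ne
  have hr : 0 < -(Real.Gamma (2 - α) / (1 - α)) :=
    neg_pos.2 (div_neg_of_pos_of_neg (Real.Gamma_pos_of_pos (by linarith)) (by linarith))
  have hangle : Real.cos ((θ - Real.pi) * -(1 / α)) = Real.sin (Real.pi / α) := by
    rw [← Real.cos_pi_div_two_sub, ← Real.cos_neg]
    congr 1
    rw [hθ_def]
    field_simp
  have hmodulus : (-(Real.Gamma (2 - α) / (1 - α))) ^ (-(1 / α)) =
      ((α - 1) / Real.Gamma (2 - α)) ^ (1 / α) := by
    rw [Real.rpow_neg hr.le, ← Real.inv_rpow hr.le, ← div_neg, neg_sub, inv_div]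
  rw [integral_cexp_neg_mul_abs_rpow_mul_sign (by linarith) hc,
    ofReal_mul_cos_mul_one_add_I_mul_tan hcos, re_ofReal_mul_cos_add_sin_mul_I_cpow hr hθ, hangle,
    hmodulus, add_comm (1 / α), ← mul_assoc]
end
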